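/- arXiv:2605.31405 — 2 statements merged into one kernel-verified Lean document; each statement's English description precedes it below -/
import Mathlib

section
/- Let e, k : ℝ → ℝ be continuous on [0,T] with k(t) > 0 for all t ∈ [0,T] and |e(0)| < k(0). Suppose there is a constant B such that for all t ∈ [0,T] with |e(t)| < k(t), we have log(k(t)²/(k(t)² − e(t)²)) ≤ B. Then |e(t)| < k(t) for all t ∈ [0,T], and moreover e(t)² ≤ k(t)²·(1 − exp(−B)). -/
theorem barrier_never_violated (e k : ℝ → ℝ) (T B : ℝ) (hT : 0 ≤ T)
    (he : ContinuousOn e (Set.Icc 0 T)) (hk : ContinuousOn k (Set.Icc 0 T))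
    (hkpos : ∀ t ∈ Set.Icc (0 : ℝ) T, 0 < k t)
    (h0 : |e 0| < k 0)
    (hB : ∀ t ∈ Set.Icc (0 : ℝ) T, |e t| < k t →
      Real.log (k t ^ 2 / (k t ^ 2 - e t ^ 2)) ≤ B) :
    ∀ t ∈ Set.Icc (0 : ℝ) T,
      |e t| < k t ∧ e t ^ 2 ≤ k t ^ 2 * (1 - Real.exp (-B)) := by
  set c : ℝ := 1 - Real.exp (-B) with hc
  -- key lemma 1: if |e t| < k t then the quantitative bound holds
  have key1 : ∀ t ∈ Set.Icc (0 : ℝ) T, |e t| < k t → e t ^ 2 ≤ k t ^ 2 * c := by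
    intro t ht hlt
    have hkt := hkpos t ht
    have habs := abs_lt.mp hlt
    have hsq : e t ^ 2 < k t ^ 2 := sq_lt_sq' habs.1 habs.2
    have hden : 0 < k t ^ 2 - e t ^ 2 := by linarith
    have hpos : 0 < k t ^ 2 / (k t ^ 2 - e t ^ 2) := by positivity
    have hlog := hB t ht hlt
    have hle : k t ^ 2 / (k t ^ 2 - e t ^ 2) ≤ Real.exp B :=
      (Real.log_le_iff_le_exp hpos).mp hlog
    have h2 : k t ^ 2 ≤ Real.exp B * (k t ^ 2 - e t ^ 2) :=
      (div_le_iff₀ hden).mp hle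
    have hmul : Real.exp (-B) * Real.exp B = 1 := by
      rw [← Real.exp_add]; simp
    have hexp : 0 < Real.exp (-B) := Real.exp_pos _
    nlinarith [mul_le_mul_of_nonneg_left h2 hexp.le]
  -- key lemma 2: the quantitative bound implies strict inequality
  have key2 : ∀ t ∈ Set.Icc (0 : ℝ) T, e t ^ 2 ≤ k t ^ 2 * c → |e t| < k t := by
    intro t ht hle
    have hkt := hkpos t ht
    have hexp : 0 < Real.exp (-B) := Real.exp_pos _
    have hksq : 0 < k t ^ 2 := by positivity
    have : e t ^ 2 < k t ^ 2 := by nlinarith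
    nlinarith [abs_nonneg (e t), sq_abs (e t)]
  -- main claim: |e t| < k t everywhere
  have main : ∀ t ∈ Set.Icc (0 : ℝ) T, |e t| < k t := by
    by_contra hcon
    push_neg at hcon
    obtain ⟨t₀, ht₀, hge⟩ := hcon
    set A : Set ℝ := {t | t ∈ Set.Icc (0 : ℝ) T ∧ k t ≤ |e t|} with hA
    have hne : A.Nonempty := ⟨t₀, ht₀, hge⟩
    have hclosed : IsClosed A := by
      have hf : ContinuousOn (fun t => k t - |e t|) (Set.Icc 0 T) :=
        hk.sub he.abs
      have : A = Set.Icc 0 T ∩ (fun t => k t - |e t|) ⁻¹' Set.Iic 0 := by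
        ext t; simp [hA, Set.mem_Icc, and_assoc, sub_nonpos]
      rw [this]
      exact hf.preimage_isClosed_of_isClosed isClosed_Icc isClosed_Iic
    have hbdd : BddBelow A := ⟨0, fun x hx => hx.1.1⟩
    set τ := sInf A with hτ
    have hτA : τ ∈ A := hclosed.csInf_mem hne hbdd
    have hτIcc : τ ∈ Set.Icc (0 : ℝ) T := hτA.1
    have hτ0 : 0 < τ := by
      rcases lt_or_eq_of_le hτIcc.1 with h | h
      · exact h
      · exfalso; rw [← h] at hτA; exact absurd hτA.2 (not_le.mpr h0)
    -- every s in Ico 0 τ satisfies |e s| < k s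
    have hlt : ∀ s ∈ Set.Ico (0 : ℝ) τ, |e s| < k s := by
      intro s hs
      by_contra hge'
      push_neg at hge'
      have hsIcc : s ∈ Set.Icc (0 : ℝ) T := ⟨hs.1, le_trans hs.2.le hτIcc.2⟩
      have : τ ≤ s := csInf_le hbdd ⟨hsIcc, hge'⟩
      exact absurd hs.2 (not_lt.mpr this)
    -- take limits: g := e² - k²·c ≤ 0 on Ico 0 τ, hence at τ
    set g : ℝ → ℝ := fun t => e t ^ 2 - k t ^ 2 * c with hg
    have hgc : ContinuousOn g (Set.Icc 0 T) :=
      (he.pow 2).sub ((hk.pow 2).mul continuousOn_const)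
    have hsub : Set.Ico (0 : ℝ) τ ⊆ Set.Icc 0 T :=
      fun s hs => ⟨hs.1, le_trans hs.2.le hτIcc.2⟩
    have htend : Filter.Tendsto g (nhdsWithin τ (Set.Ico 0 τ)) (nhds (g τ)) :=
      (hgc τ hτIcc).mono hsub
    have hclo : τ ∈ closure (Set.Ico 0 τ) := by
      rw [closure_Ico hτ0.ne]
      exact ⟨hτ0.le, le_refl τ⟩
    have hnebot : (nhdsWithin τ (Set.Ico 0 τ)).NeBot :=
      mem_closure_iff_nhdsWithin_neBot.mp hclo
    have hev : ∀ᶠ s in nhdsWithin τ (Set.Ico 0 τ), g s ≤ 0 := by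
      filter_upwards [self_mem_nhdsWithin] with s hs
      have := key1 s (hsub hs) (hlt s hs)
      simp only [hg]; linarith
    have hgτ : g τ ≤ 0 := le_of_tendsto htend hev
    have : |e τ| < k τ := key2 τ hτIcc (by simp only [hg] at hgτ; linarith)
    exact absurd hτA.2 (not_le.mpr this)
  intro t ht
  exact ⟨main t ht, key1 t ht (main t ht)⟩
end

section
/- Let a, b : Fin n → ℝ be positive sequences and let V = (1/2)·Σᵢ log(kₚᵢ²/(kₚᵢ² − eᵢ²)) + (1/2)·Σᵢ log(kᵥᵢ²/(kᵥᵢ² − ėᵢ²)) with 0 < kₚᵢ, 0 < kᵥᵢ, |eᵢ| < kₚᵢ, |ėᵢ| < kᵥᵢ. If W := Σᵢ λₚᵢ·eᵢ²/(kₚᵢ² − eᵢ²) + Σᵢ λdᵢ·ėᵢ²/(kᵥᵢ² − ėᵢ²) with all λₚᵢ, λdᵢ ≥ ϱ > 0, then W ≥ ϱ · Σᵢ [log(kₚᵢ²/(kₚᵢ² − eᵢ²)) + log(kᵥᵢ²/(kᵥᵢ² − ėᵢ²))] = 2ϱ·V. -/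
lemma aux_point (x k l ϱ : ℝ) (hϱ : 0 < ϱ) (hk : 0 < k) (hx : |x| < k)
    (hl : ϱ ≤ l) : ϱ * Real.log (k ^ 2 / (k ^ 2 - x ^ 2)) ≤ l * x ^ 2 / (k ^ 2 - x ^ 2) := by
  have hd : 0 < k ^ 2 - x ^ 2 := by
    have := sq_lt_sq' (neg_lt_of_abs_lt hx) (lt_of_abs_lt hx)
    linarith
  have h1 : k ^ 2 / (k ^ 2 - x ^ 2) = 1 + x ^ 2 / (k ^ 2 - x ^ 2) := by
    field_simp
    ring
  have h2 : Real.log (k ^ 2 / (k ^ 2 - x ^ 2)) ≤ x ^ 2 / (k ^ 2 - x ^ 2) := by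
    rw [h1]
    have := Real.log_le_sub_one_of_pos (x := 1 + x ^ 2 / (k ^ 2 - x ^ 2))
      (by positivity)
    linarith
  have h3 : ϱ * Real.log (k ^ 2 / (k ^ 2 - x ^ 2)) ≤ ϱ * (x ^ 2 / (k ^ 2 - x ^ 2)) :=
    mul_le_mul_of_nonneg_left h2 hϱ.le
  have h4 : ϱ * (x ^ 2 / (k ^ 2 - x ^ 2)) ≤ l * (x ^ 2 / (k ^ 2 - x ^ 2)) :=
    mul_le_mul_of_nonneg_right hl (by positivity)
  calc ϱ * Real.log (k ^ 2 / (k ^ 2 - x ^ 2)) ≤ l * (x ^ 2 / (k ^ 2 - x ^ 2)) := h3.trans h4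
    _ = l * x ^ 2 / (k ^ 2 - x ^ 2) := by ring

theorem dissipation_dominates_lyapunov (n : ℕ) (e ed kp kv lp ld : Fin n → ℝ)
    (ϱ : ℝ) (hϱ : 0 < ϱ)
    (hkp : ∀ i, 0 < kp i ∧ |e i| < kp i)
    (hkv : ∀ i, 0 < kv i ∧ |ed i| < kv i)
    (hlp : ∀ i, ϱ ≤ lp i) (hld : ∀ i, ϱ ≤ ld i) :
    ϱ * ((∑ i, Real.log (kp i ^ 2 / (kp i ^ 2 - e i ^ 2))) +
          ∑ i, Real.log (kv i ^ 2 / (kv i ^ 2 - ed i ^ 2))) ≤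
      (∑ i, lp i * e i ^ 2 / (kp i ^ 2 - e i ^ 2)) +
        ∑ i, ld i * ed i ^ 2 / (kv i ^ 2 - ed i ^ 2) := by
  rw [mul_add, Finset.mul_sum, Finset.mul_sum]
  exact add_le_add
    (Finset.sum_le_sum fun i _ =>
      aux_point (e i) (kp i) (lp i) ϱ hϱ (hkp i).1 (hkp i).2 (hlp i))
    (Finset.sum_le_sum fun i _ =>
      aux_point (ed i) (kv i) (ld i) ϱ hϱ (hkv i).1 (hkv i).2 (hld i))
end
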